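/- arXiv:1007.5231 — 6 statements merged into one kernel-verified Lean document; each statement's English description precedes it below -/
import Mathlib

section
/- Let F ⊆ G be nonempty faces of P. Then there exists a lattice point v lying in the tangent cone T_F such that T_G = {t + r • v | t ∈ T_F, r ∈ ℝ} and S_G = {s + m • v | s ∈ S_F, m ∈ ℤ}. -/
open Set

/-- A lattice point of `ℝⁿ`: all coordinates are integers. -/
def IsLatticePt {n : ℕ} (x : Fin n → ℝ) : Prop := ∀ i, ∃ m : ℤ, x i = (m : ℝ)

/-- The tangent cone of `P` at a face `F`: the set of all finite nonnegative real linear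
combinations of vectors `p - f` with `p ∈ P` and `f ∈ F`. -/
def tangentCone {n : ℕ} (P F : Set (Fin n → ℝ)) : Set (Fin n → ℝ) :=
  { x | ∃ (k : ℕ) (c : Fin k → ℝ) (p f : Fin k → (Fin n → ℝ)),
      (∀ i, 0 ≤ c i) ∧ (∀ i, p i ∈ P) ∧ (∀ i, f i ∈ F) ∧
      x = ∑ i, c i • (p i - f i) }

/-- The monoid of lattice points of the tangent cone. -/
def latticeTangentCone {n : ℕ} (P F : Set (Fin n → ℝ)) : Set (Fin n → ℝ) :=
  { x ∈ tangentCone P F | IsLatticePt x }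

/-- The dilate `k • P` of a subset `P ⊆ ℝⁿ` by an integer `k`. -/
def dilate {n : ℕ} (k : ℤ) (P : Set (Fin n → ℝ)) : Set (Fin n → ℝ) :=
  (fun p => k • p) '' P

namespace Aux

variable {n : ℕ} {P F G : Set (Fin n → ℝ)}

lemma tc_zero : (0 : Fin n → ℝ) ∈ tangentCone P F :=
  ⟨0, Fin.elim0, Fin.elim0, Fin.elim0, fun i => i.elim0, fun i => i.elim0, fun i => i.elim0,
    by simp⟩

lemma tc_single {c : ℝ} (hc : 0 ≤ c) {p f : Fin n → ℝ} (hp : p ∈ P) (hf : f ∈ F) :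
    c • (p - f) ∈ tangentCone P F :=
  ⟨1, fun _ => c, fun _ => p, fun _ => f, fun _ => hc, fun _ => hp, fun _ => hf, by simp⟩

lemma tc_add {x y : Fin n → ℝ} (hx : x ∈ tangentCone P F) (hy : y ∈ tangentCone P F) :
    x + y ∈ tangentCone P F := by
  obtain ⟨k, c, p, f, hc, hp, hf, rfl⟩ := hx
  obtain ⟨k', c', p', f', hc', hp', hf', rfl⟩ := hy
  refine ⟨k + k', Fin.addCases c c', Fin.addCases p p', Fin.addCases f f', ?_, ?_, ?_, ?_⟩
  · exact fun i => Fin.addCases (fun i => by simpa using hc i) (fun i => by simpa using hc' i) i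
  · exact fun i => Fin.addCases (fun i => by simpa using hp i) (fun i => by simpa using hp' i) i
  · exact fun i => Fin.addCases (fun i => by simpa using hf i) (fun i => by simpa using hf' i) i
  · rw [Fin.sum_univ_add]
    simp

lemma tc_smul {r : ℝ} (hr : 0 ≤ r) {x : Fin n → ℝ} (hx : x ∈ tangentCone P F) :
    r • x ∈ tangentCone P F := by
  obtain ⟨k, c, p, f, hc, hp, hf, rfl⟩ := hx
  exact ⟨k, fun i => r * c i, p, f, fun i => mul_nonneg hr (hc i), hp, hf, by
    rw [Finset.smul_sum]; simp [smul_smul]⟩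

lemma tc_sum {ι : Type*} (s : Finset ι) (x : ι → (Fin n → ℝ))
    (h : ∀ i ∈ s, x i ∈ tangentCone P F) : ∑ i ∈ s, x i ∈ tangentCone P F :=
  Finset.sum_induction x (· ∈ tangentCone P F) (fun _ _ ha hb => tc_add ha hb) tc_zero h

lemma tc_mono (hFG : F ⊆ G) : tangentCone P F ⊆ tangentCone P G := by
  rintro x ⟨k, c, p, f, hc, hp, hf, rfl⟩
  exact ⟨k, c, p, f, hc, hp, fun i => hFG (hf i), rfl⟩

lemma lat_zero : IsLatticePt (0 : Fin n → ℝ) := fun i => ⟨0, by simp⟩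

lemma lat_add {x y : Fin n → ℝ} (hx : IsLatticePt x) (hy : IsLatticePt y) :
    IsLatticePt (x + y) := fun i => by
  obtain ⟨a, ha⟩ := hx i; obtain ⟨b, hb⟩ := hy i
  exact ⟨a + b, by simp [ha, hb]⟩

lemma lat_sub {x y : Fin n → ℝ} (hx : IsLatticePt x) (hy : IsLatticePt y) :
    IsLatticePt (x - y) := fun i => by
  obtain ⟨a, ha⟩ := hx i; obtain ⟨b, hb⟩ := hy i
  exact ⟨a - b, by simp [ha, hb]⟩

lemma lat_zsmul (m : ℤ) {x : Fin n → ℝ} (hx : IsLatticePt x) :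
    IsLatticePt ((m : ℝ) • x) := fun i => by
  obtain ⟨a, ha⟩ := hx i
  exact ⟨m * a, by simp [ha]⟩

lemma lat_sum {ι : Type*} (s : Finset ι) (x : ι → (Fin n → ℝ))
    (h : ∀ i ∈ s, IsLatticePt (x i)) : IsLatticePt (∑ i ∈ s, x i) :=
  Finset.sum_induction x IsLatticePt (fun _ _ => lat_add) lat_zero h

open scoped Classical in
lemma face_subset (V : Finset (Fin n → ℝ)) (hP : P = convexHull ℝ (V : Set (Fin n → ℝ)))
    (hGne : G.Nonempty) (hGexp : IsExposed ℝ P G) :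
    G ⊆ convexHull ℝ ((V.filter (· ∈ G)) : Set (Fin n → ℝ)) := by
  obtain ⟨l, hl⟩ := hGexp hGne
  intro g hg
  have hgG := hg
  rw [hl] at hg
  obtain ⟨hgP, hmax⟩ := hg
  rw [hP, Finset.convexHull_eq] at hgP
  obtain ⟨w, hw0, hw1, hwz⟩ := hgP
  have hkey : ∀ y ∈ V, w y ≠ 0 → y ∈ G := by
    intro y hy hwy
    have hyP : y ∈ P := hP ▸ subset_convexHull ℝ _ (by exact_mod_cast hy)
    by_contra hyG
    have hylt : l y < l g := by
      rcases lt_or_eq_of_le (hmax y hyP) with h | h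
      · exact h
      · exact absurd (hl ▸ ⟨hyP, fun z hz => h ▸ hmax z hz⟩) hyG
    have hgl : l g = ∑ y ∈ V, w y * l y := by
      rw [← hwz, Finset.centerMass_eq_of_sum_1 _ _ hw1, map_sum]
      simp
    have : ∑ y ∈ V, w y * l y < ∑ y ∈ V, w y * l g := by
      apply Finset.sum_lt_sum
      · intro i hi
        exact mul_le_mul_of_nonneg_left (hmax i (hP ▸ subset_convexHull ℝ _ (by exact_mod_cast hi))) (hw0 i hi)
      · exact ⟨y, hy, by
          have := (hw0 y hy).lt_of_ne (Ne.symm hwy)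
          exact mul_lt_mul_of_pos_left hylt this⟩
    rw [← Finset.sum_mul, hw1, one_mul, ← hgl] at this
    exact lt_irrefl _ this
  have : g = (V.filter (fun y => w y ≠ 0)).centerMass w id := by
    rw [Finset.centerMass_filter_ne_zero, hwz]
  rw [this]
  apply Finset.centerMass_mem_convexHull
  · intro i hi; exact hw0 i (Finset.mem_filter.mp hi).1
  · rw [Finset.sum_filter_ne_zero, hw1]; norm_num
  · intro i hi
    obtain ⟨hiV, hiw⟩ := Finset.mem_filter.mp hi
    simp only [Finset.coe_filter, Set.mem_setOf_eq, id]
    exact ⟨hiV, hkey i hiV hiw⟩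

end Aux

open Aux

/-- If `F ⊆ G` are nonempty (exposed) faces of the `n`-dimensional lattice
polytope `P`, then there is a lattice point `v` in the tangent cone `T_F` such that
`T_G = T_F + ℝ v` and `S_G = S_F + ℤ v`. -/
theorem stmt0 {n : ℕ} (hn : 1 ≤ n) (P : Set (Fin n → ℝ))
    (V : Finset (Fin n → ℝ)) (hV : ∀ v ∈ V, IsLatticePt v)
    (hP : P = convexHull ℝ (V : Set (Fin n → ℝ)))
    (hdim : affineSpan ℝ P = ⊤)
    (F G : Set (Fin n → ℝ))
    (hFne : F.Nonempty) (hFexp : IsExposed ℝ P F)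
    (hGne : G.Nonempty) (hGexp : IsExposed ℝ P G)
    (hFG : F ⊆ G) :
    ∃ v : Fin n → ℝ, IsLatticePt v ∧ v ∈ tangentCone P F ∧
      tangentCone P G = {x | ∃ t ∈ tangentCone P F, ∃ r : ℝ, x = t + r • v} ∧
      latticeTangentCone P G =
        {x | ∃ s ∈ latticeTangentCone P F, ∃ m : ℤ, x = s + (m : ℝ) • v} := by
  classical
  have hmemP : ∀ w ∈ V, w ∈ P := fun w hw =>
    hP ▸ subset_convexHull ℝ _ (by exact_mod_cast hw)
  -- a lattice point f0 in F
  have hFsub := face_subset (P := P) (G := F) V hP hFne hFexp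
  have hTFne : (V.filter (· ∈ F)).Nonempty := by
    by_contra h
    rw [Finset.not_nonempty_iff_eq_empty] at h
    obtain ⟨f, hf⟩ := hFne
    have := hFsub hf
    rw [h] at this
    simp at this
  obtain ⟨f0, hf0⟩ := hTFne
  rw [Finset.mem_filter] at hf0
  obtain ⟨hf0V, hf0F⟩ := hf0
  -- the vertex set of G
  set T : Finset (Fin n → ℝ) := V.filter (· ∈ G) with hT
  have hTV : ∀ w ∈ T, w ∈ V := fun w hw => (Finset.mem_filter.mp hw).1
  have hTG : ∀ w ∈ T, w ∈ G := fun w hw => (Finset.mem_filter.mp hw).2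
  set v : Fin n → ℝ := ∑ w ∈ T, (w - f0) with hv
  have hvlat : IsLatticePt v :=
    lat_sum T _ (fun w hw => lat_sub (hV w (hTV w hw)) (hV f0 hf0V))
  have hvTF : v ∈ tangentCone P F := by
    apply tc_sum
    intro w hw
    have := tc_single (P := P) (F := F) zero_le_one (hmemP w (hTV w hw)) hf0F
    rwa [one_smul] at this
  have hnegv : -v ∈ tangentCone P G := by
    have : -v = ∑ w ∈ T, (f0 - w) := by
      rw [hv, ← Finset.sum_neg_distrib]
      simp [neg_sub]
    rw [this]
    apply tc_sum
    intro w hw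
    have := tc_single (P := P) (F := G) zero_le_one (hmemP f0 hf0V) (hTG w hw)
    rwa [one_smul] at this
  -- convex combinations for points of G
  have hcombo : ∀ g ∈ G, ∃ lam : (Fin n → ℝ) → ℝ,
      (∀ w ∈ T, 0 ≤ lam w) ∧ ∑ w ∈ T, lam w = 1 ∧ ∑ w ∈ T, lam w • w = g := by
    intro g hg
    have := face_subset (P := P) (G := G) V hP hGne hGexp hg
    rw [Finset.convexHull_eq] at this
    obtain ⟨lam, h0, h1, h2⟩ := this
    refine ⟨lam, h0, h1, ?_⟩
    rw [Finset.centerMass_eq_of_sum_1 _ _ h1] at h2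
    simpa using h2
  -- the key step
  have hkey : ∀ p ∈ P, ∀ g ∈ G, (p - g) + v ∈ tangentCone P F := by
    intro p hp g hg
    obtain ⟨lam, hlam0, hlam1, hlamg⟩ := hcombo g hg
    have heq : (p - g) + v = (p - f0) + ∑ w ∈ T, (1 - lam w) • (w - f0) := by
      have h3 : ∑ w ∈ T, (1 - lam w) • (w - f0) = v - (g - f0) := by
        have : ∀ w ∈ T, (1 - lam w) • (w - f0) = (w - f0) - (lam w • w - lam w • f0) := by
          intro w _
          rw [sub_smul, one_smul, smul_sub]
        rw [Finset.sum_congr rfl this, Finset.sum_sub_distrib, ← hv, Finset.sum_sub_distrib,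
          hlamg, ← Finset.sum_smul, hlam1, one_smul]
      rw [h3]
      abel
    rw [heq]
    apply tc_add
    · have := tc_single (P := P) (F := F) zero_le_one hp hf0F
      rwa [one_smul] at this
    · apply tc_sum
      intro w hw
      refine tc_single ?_ (hmemP w (hTV w hw)) hf0F
      have : lam w ≤ 1 := hlam1 ▸ Finset.single_le_sum hlam0 hw
      linarith
  -- every element of T_G shifts into T_F
  have hshift : ∀ x ∈ tangentCone P G, ∃ C : ℝ, 0 ≤ C ∧ x + C • v ∈ tangentCone P F := by
    rintro x ⟨k, c, p, g, hc, hp, hg, rfl⟩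
    refine ⟨∑ i, c i, Finset.sum_nonneg (fun i _ => hc i), ?_⟩
    have heq : (∑ i, c i • (p i - g i)) + (∑ i, c i) • v
        = ∑ i : Fin k, c i • ((p i - g i) + v) := by
      rw [Finset.sum_smul, ← Finset.sum_add_distrib]
      congr 1
      ext i
      rw [smul_add]
    rw [heq]
    exact tc_sum _ _ (fun i _ => tc_smul (hc i) (hkey (p i) (hp i) (g i) (hg i)))
  refine ⟨v, hvlat, hvTF, ?_, ?_⟩
  · ext x
    constructor
    · intro hx
      obtain ⟨C, hC0, hC⟩ := hshift x hx
      exact ⟨x + C • v, hC, -C, by module⟩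
    · rintro ⟨t, ht, r, rfl⟩
      rcases le_or_gt 0 r with h | h
      · exact tc_add (tc_mono hFG ht) (tc_smul h (tc_mono hFG hvTF))
      · have : t + r • v = t + (-r) • (-v) := by module
        rw [this]
        exact tc_add (tc_mono hFG ht) (tc_smul (by linarith) hnegv)
  · ext x
    constructor
    · rintro ⟨hxT, hxlat⟩
      obtain ⟨C, hC0, hC⟩ := hshift x hxT
      have hmC : C ≤ ((⌈C⌉ : ℤ) : ℝ) := Int.le_ceil C
      have h1 : x + ((⌈C⌉ : ℤ) : ℝ) • v ∈ tangentCone P F := by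
        have heq : x + ((⌈C⌉ : ℤ) : ℝ) • v = (x + C • v) + (((⌈C⌉ : ℤ) : ℝ) - C) • v := by
          module
        rw [heq]
        exact tc_add hC (tc_smul (by linarith) hvTF)
      refine ⟨x + ((⌈C⌉ : ℤ) : ℝ) • v, ⟨h1, lat_add hxlat (lat_zsmul _ hvlat)⟩, -⌈C⌉, ?_⟩
      push_cast
      module
    · rintro ⟨s, ⟨hsT, hslat⟩, m, rfl⟩
      refine ⟨?_, lat_add hslat (lat_zsmul _ hvlat)⟩
      rcases le_or_gt 0 ((m : ℝ)) with h | h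
      · exact tc_add (tc_mono hFG hsT) (tc_smul h (tc_mono hFG hvTF))
      · have : s + (m : ℝ) • v = s + (-(m : ℝ)) • (-v) := by module
        rw [this]
        exact tc_add (tc_mono hFG hsT) (tc_smul (by linarith) hnegv)
end

section
/- Let R be a commutative ring with unit, let S be an additive submonoid of ℤⁿ = (Fin n → ℤ), let v ∈ S, and let S' = {s + m • v | s ∈ S, m ∈ ℤ} (an additive submonoid of ℤⁿ containing S). Equip the commutative ring AddMonoidAlgebra R S' with the algebra structure over AddMonoidAlgebra R S induced by mapping along the inclusion S ≤ S' (Finsupp.mapDomain of the inclusion). Then AddMonoidAlgebra R S' is the localization of AddMonoidAlgebra R S away from the single element x = Finsupp.single v (1 : R), i.e. IsLocalization.Away x (AddMonoidAlgebra R S') holds. -/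
/-!
Every element of `S'` becomes an element of `S` after adding a large enough multiple of `v`, and
`v` is an additive unit of `S'`. Hence each element of `R[S']` is an element of `R[S]` divided by
a power of `x = single v 1`, and `R[S] → R[S']` is injective because `S → S'` is, so no
denominators are needed to detect equality.
-/

namespace AddMonoidAlgebra

theorem isUnit_single_of_isAddUnit {R N : Type*} [Semiring R] [AddMonoid N] {m : N}
    (hm : IsAddUnit m) : IsUnit (single m (1 : R)) := by
  obtain ⟨u, rfl⟩ := hm
  exact ⟨⟨single u 1, single ↑(-u) 1, by simp [one_def], by simp [one_def]⟩, rfl⟩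

theorem isLocalization_away_single_of_injective {R M N : Type*} [CommSemiring R] [AddCommMonoid M]
    [AddCommMonoid N] (f : M →+ N) (hf : Function.Injective f) (v : M)
    (hv : IsAddUnit (f v)) (hN : ∀ y : N, ∃ k : ℕ, ∃ m : M, y + k • f v = f m) :
    letI := (mapDomainRingHom R f).toAlgebra
    IsLocalization.Away (single v (1 : R)) R[N] := by
  let := (mapDomainRingHom R f).toAlgebra
  have algebraMap_single (m : M) (r : R) : algebraMap R[M] R[N] (single m r) = single (f m) r :=
    mapDomain_single
  refine IsLocalization.Away.mk _ ?_ (fun z ↦ ?_) (fun a b hab ↦ ⟨0, ?_⟩)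
  · rw [algebraMap_single]
    exact isUnit_single_of_isAddUnit hv
  · induction z using induction_linear with
    | zero => exact ⟨0, 0, by simp⟩
    | add z₁ z₂ h₁ h₂ =>
      obtain ⟨n₁, a₁, h₁⟩ := h₁
      obtain ⟨n₂, a₂, h₂⟩ := h₂
      refine ⟨n₁ + n₂, a₁ * single v 1 ^ n₂ + a₂ * single v 1 ^ n₁, ?_⟩
      rw [map_add, map_mul, map_mul, map_pow, map_pow, ← h₁, ← h₂]
      ring
    | single y r =>
      obtain ⟨k, m, hm⟩ := hN y
      refine ⟨k, single m r, ?_⟩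
      rw [algebraMap_single, algebraMap_single, single_pow, single_mul_single, one_pow, mul_one, hm]
  · simpa using mapDomain_injective hf hab

end AddMonoidAlgebra

theorem AddSubmonoid.exists_add_nsmul_mem {G : Type*} [AddCommGroup G] {S : AddSubmonoid G}
    {v x : G} (hv : v ∈ S) (hx : ∃ s ∈ S, ∃ m : ℤ, x = s + m • v) : ∃ k : ℕ, x + k • v ∈ S := by
  obtain ⟨s, hs, m, rfl⟩ := hx
  refine ⟨(-m).toNat, ?_⟩
  have hm : m • v = m.toNat • v - (-m).toNat • v := by
    rw [← natCast_zsmul, ← natCast_zsmul, ← sub_smul, Int.toNat_sub_toNat_neg]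
  rw [hm, add_assoc, sub_add_cancel]
  exact add_mem hs (nsmul_mem hv _)

/-- Let `R` be a commutative ring, `S ≤ S'` additive submonoids of `ℤⁿ` with
`v ∈ S` and `S' = {s + m • v | s ∈ S, m ∈ ℤ}`. With the `AddMonoidAlgebra R S`-algebra
structure on `AddMonoidAlgebra R S'` given by `Finsupp.mapDomain` along the inclusion,
`AddMonoidAlgebra R S'` is the localization of `AddMonoidAlgebra R S` away from
`Finsupp.single v 1`. -/
theorem stmt2 {n : ℕ} (R : Type*) [CommRing R]
    (S S' : AddSubmonoid (Fin n → ℤ)) (v : Fin n → ℤ) (hv : v ∈ S)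
    (hS' : (S' : Set (Fin n → ℤ)) = {x | ∃ s ∈ S, ∃ m : ℤ, x = s + m • v})
    (hle : S ≤ S') :
    letI : Algebra (AddMonoidAlgebra R S) (AddMonoidAlgebra R S') :=
      (AddMonoidAlgebra.mapDomainRingHom R (AddSubmonoid.inclusion hle)).toAlgebra
    IsLocalization.Away
      (AddMonoidAlgebra.single (⟨v, hv⟩ : S) (1 : R) : AddMonoidAlgebra R S)
      (AddMonoidAlgebra R S') := by
  have mem_S' (x : Fin n → ℤ) : x ∈ S' ↔ ∃ s ∈ S, ∃ m : ℤ, x = s + m • v := Set.ext_iff.1 hS' x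
  have v_isAddUnit : IsAddUnit (AddSubmonoid.inclusion hle ⟨v, hv⟩) :=
    isAddUnit_iff_exists_neg.2
      ⟨⟨-v, (mem_S' _).2 ⟨0, S.zero_mem, -1, by simp⟩⟩, Subtype.ext (add_neg_cancel v)⟩
  refine AddMonoidAlgebra.isLocalization_away_single_of_injective _
    (AddSubmonoid.inclusion_injective hle) _ v_isAddUnit fun ⟨y, hy⟩ ↦ ?_
  obtain ⟨k, hk⟩ := AddSubmonoid.exists_add_nsmul_mem hv ((mem_S' y).1 hy)
  exact ⟨k, ⟨_, hk⟩, rfl⟩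
end

section
/- There exists an integer m with 0 ≤ m ≤ n such that for every integer j ≥ 1 the interior of the dilate j•P contains no lattice point if and only if j ≤ m. (In particular the interior of (n+1)•P always contains a lattice point.) -/
open Set Pointwise

lemma IsLatticePt.add {n : ℕ} {x y : Fin n → ℝ} (hx : IsLatticePt x) (hy : IsLatticePt y) :
    IsLatticePt (x + y) := by
  intro i
  obtain ⟨a, ha⟩ := hx i
  obtain ⟨b, hb⟩ := hy i
  exact ⟨a + b, by simp [ha, hb]⟩

lemma isLatticePt_sum {n : ℕ} {ι : Type*} (s : Finset ι) (f : ι → Fin n → ℝ)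
    (h : ∀ i ∈ s, IsLatticePt (f i)) : IsLatticePt (∑ i ∈ s, f i) := by
  classical
  induction s using Finset.cons_induction with
  | empty => intro i; exact ⟨0, by simp⟩
  | cons a s ha ih =>
    rw [Finset.sum_cons]
    exact (h a (Finset.mem_cons_self a s)).add
      (ih fun i hi => h i (Finset.mem_cons_of_mem hi))

lemma dilate_eq {n : ℕ} (k : ℤ) (P : Set (Fin n → ℝ)) : dilate k P = (k : ℝ) • P := by
  have h : ∀ p : Fin n → ℝ, k • p = (k : ℝ) • p := fun p => (Int.cast_smul_eq_zsmul ℝ k p).symm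
  simp only [dilate, h, Set.image_smul]

/-- There is an integer `0 ≤ m ≤ n` such that for every integer `j ≥ 1`,
the interior of `j • P` contains no lattice point if and only if `j ≤ m`. -/
theorem stmt4 {n : ℕ} (hn : 1 ≤ n) (P : Set (Fin n → ℝ))
    (V : Finset (Fin n → ℝ)) (hV : ∀ v ∈ V, IsLatticePt v)
    (hP : P = convexHull ℝ (V : Set (Fin n → ℝ)))
    (hdim : affineSpan ℝ P = ⊤) :
    ∃ m : ℤ, 0 ≤ m ∧ m ≤ (n : ℤ) ∧
      ∀ j : ℤ, 1 ≤ j →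
        ((¬ ∃ x ∈ interior (dilate j P), IsLatticePt x) ↔ j ≤ m) := by
  classical
  have hPconv : Convex ℝ P := hP ▸ convex_convexHull ℝ _
  have hspanV : affineSpan ℝ (V : Set (Fin n → ℝ)) = ⊤ := by
    rw [← affineSpan_convexHull, ← hP]; exact hdim
  -- V is nonempty
  obtain ⟨v, hvV⟩ : ∃ v, v ∈ V := by
    by_contra hVe
    push_neg at hVe
    have : (V : Set (Fin n → ℝ)) = ∅ := by
      ext x; simp [hVe x]
    rw [this] at hspanV
    rw [AffineSubspace.span_empty] at hspanV
    have : (0 : Fin n → ℝ) ∈ (⊥ : AffineSubspace ℝ (Fin n → ℝ)) := by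
      rw [hspanV]; trivial
    exact this
  have hvP : v ∈ P := hP ▸ subset_convexHull ℝ _ hvV
  have hvlat : IsLatticePt v := hV v hvV
  set S : ℤ → Prop := fun j => ∃ x ∈ interior (dilate j P), IsLatticePt x with hS
  -- Base case: S (n+1)
  have base : S ((n : ℤ) + 1) := by
    obtain ⟨t, hts, htspan, htind⟩ := exists_affineIndependent ℝ (Fin n → ℝ) (V : Set (Fin n → ℝ))
    haveI : Fintype t := (V.finite_toSet.subset hts).fintype
    have htot : affineSpan ℝ (Set.range (Subtype.val : t → Fin n → ℝ)) = ⊤ := by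
      rw [Subtype.range_coe, htspan, hspanV]
    let b : AffineBasis t ℝ (Fin n → ℝ) := ⟨Subtype.val, htind, htot⟩
    have hcard : Fintype.card t = n + 1 := by
      have := htind.affineSpan_eq_top_iff_card_eq_finrank_add_one.mp htot
      simpa using this
    have hc : Finset.centroid ℝ Finset.univ ⇑b ∈ interior P := by
      have h1 := b.centroid_mem_interior_convexHull
      have h2 : Set.range ⇑b = t := Subtype.range_coe
      rw [h2] at h1
      refine interior_mono ?_ h1
      rw [hP]
      exact convexHull_mono hts
    set c := Finset.centroid ℝ Finset.univ ⇑b with hcdef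
    set q : Fin n → ℝ := ∑ i : t, (i : Fin n → ℝ) with hq
    haveI : Nonempty t := by
      have h0 : 0 < Fintype.card t := by rw [hcard]; omega
      exact Fintype.card_pos_iff.mp h0
    have hqc : q = ((n : ℝ) + 1) • c := by
      have hcsum : c = ∑ i : t, ((n : ℝ) + 1)⁻¹ • (i : Fin n → ℝ) := by
        rw [hcdef, Finset.centroid_def, Finset.affineCombination_eq_linear_combination _ _ _
          (Finset.sum_centroidWeights_eq_one_of_nonempty ℝ _ Finset.univ_nonempty)]
        refine Finset.sum_congr rfl fun i _ => ?_
        have : (((Finset.univ (α := t)).card : ℝ)) = (n : ℝ) + 1 := by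
          rw [Finset.card_univ, hcard]; push_cast; ring
        simp only [Finset.centroidWeights_apply, this]
        rfl
      rw [hcsum, ← Finset.smul_sum, hq, smul_smul,
        mul_inv_cancel₀ (by positivity), one_smul]
    have hqlat : IsLatticePt q := by
      apply isLatticePt_sum
      intro i _
      exact hV _ (hts i.2)
    refine ⟨q, ?_, hqlat⟩
    rw [dilate_eq, interior_smul₀ (by push_cast; positivity) P]
    rw [hqc]
    have : (((n : ℤ) + 1 : ℤ) : ℝ) = (n : ℝ) + 1 := by push_cast; ring
    rw [this]
    exact smul_mem_smul_set hc
  -- Step: S j → S (j+1) for j ≥ 1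
  have step : ∀ j : ℤ, 1 ≤ j → S j → S (j + 1) := by
    intro j hj ⟨x, hx, hxlat⟩
    have hj0 : (0 : ℝ) < (j : ℝ) := by exact_mod_cast hj.trans_lt' zero_lt_one
    have hj1 : (0 : ℝ) < (j : ℝ) + 1 := by linarith
    have hsub : (· + v) '' dilate j P ⊆ dilate (j + 1) P := by
      rintro y ⟨z, hz, rfl⟩
      rw [dilate_eq] at hz
      obtain ⟨p, hp, rfl⟩ := hz
      rw [dilate_eq]
      refine ⟨((j : ℝ) / ((j : ℝ) + 1)) • p + (1 / ((j : ℝ) + 1)) • v, ?_, ?_⟩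
      · exact hPconv hp hvP (by positivity) (by positivity) (by field_simp)
      · have hc1 : (((j : ℤ) + 1 : ℤ) : ℝ) = (j : ℝ) + 1 := by push_cast; ring
        dsimp only
        rw [hc1, smul_add, smul_smul, smul_smul]
        rw [mul_div_cancel₀ _ hj1.ne', mul_one_div, div_self hj1.ne', one_smul]
    have hmem : x + v ∈ interior (dilate (j + 1) P) := by
      have h1 : x + v ∈ (· + v) '' interior (dilate j P) := ⟨x, hx, rfl⟩
      have h2 := (Homeomorph.addRight v).isOpenMap.image_interior_subset (dilate j P) h1
      exact interior_mono hsub h2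
    exact ⟨x + v, hmem, hxlat.add hvlat⟩
  -- Existence of a minimal good natural number
  have hA : ∃ k : ℕ, 1 ≤ k ∧ S (k : ℤ) := ⟨n + 1, by omega, by
    have : ((n + 1 : ℕ) : ℤ) = (n : ℤ) + 1 := by push_cast; ring
    rw [this]; exact base⟩
  let k0 := Nat.find hA
  have hk0spec : 1 ≤ k0 ∧ S (k0 : ℤ) := Nat.find_spec hA
  have hk0min : ∀ k < k0, ¬(1 ≤ k ∧ S (k : ℤ)) := fun k hk => Nat.find_min hA hk
  have hk0le : k0 ≤ n + 1 := Nat.find_le ⟨by omega, by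
    have : ((n + 1 : ℕ) : ℤ) = (n : ℤ) + 1 := by push_cast; ring
    rw [this]; exact base⟩
  -- Upward closure: S j for all j ≥ k0
  have up : ∀ j : ℤ, (k0 : ℤ) ≤ j → S j := by
    intro j hj
    have key : ∀ d : ℕ, S ((k0 : ℤ) + d) := by
      intro d
      induction d with
      | zero => simpa using hk0spec.2
      | succ d ih =>
        have h1 : (1 : ℤ) ≤ (k0 : ℤ) + d := by
          have := hk0spec.1; omega
        have := step _ h1 ih
        have he : ((k0 : ℤ) + d) + 1 = (k0 : ℤ) + (d + 1 : ℕ) := by push_cast; ring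
        rwa [he] at this
    have : j = (k0 : ℤ) + ((j - k0).toNat : ℤ) := by omega
    rw [this]
    exact key _
  refine ⟨(k0 : ℤ) - 1, by have := hk0spec.1; omega, by omega, ?_⟩
  intro j hj
  constructor
  · intro hnS
    by_contra hgt
    push_neg at hgt
    exact hnS (up j (by omega))
  · intro hle hSj
    have hj' : j = (j.toNat : ℤ) := by omega
    have h1 : 1 ≤ j.toNat := by omega
    have h2 : j.toNat < k0 := by omega
    exact hk0min _ h2 ⟨h1, by rwa [← hj']⟩
end

section
/- Let F and G be faces of P, let v_F be a lattice point in the relative interior (intrinsicInterior) of F and v_G a lattice point in the relative interior of G. Let H be a face of P such that F ∪ G ⊆ H and H ⊆ H' for every face H' of P with F ∪ G ⊆ H' (i.e. H is the smallest face containing F and G). Then T_H = {t + r • (v_F − v_G) | t ∈ T_G, r ∈ ℝ} and S_H = {s + m • (v_F − v_G) | s ∈ S_G, m ∈ ℤ}. -/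
open Set

/-!
Let `w` be the midpoint of `vF` and `vG`. An exposed face of `P` containing `w` contains `vF` and
`vG`, and an extreme subset of `P` meeting the relative interior of some `F ⊆ P` contains `F`; so
it contains `F`, `G` and hence `H`. Separating `w - h` from the cone spanned by `V - w` (closed,
by Carathéodory's theorem for cones) then shows that every `h ∈ H` can be pushed past `w` inside
`P`: `w + ε • (w - h) ∈ P` for some `ε > 0`. This writes each `p - h` (`p ∈ P`, `h ∈ H`) as an
element of `T_G` plus a real multiple of `vF - vG`, and the reverse inclusion is clear. For the
lattice points, trade `t + r • (vF - vG)` for `(t + (r - ⌊r⌋) • (vF - vG)) + ⌊r⌋ • (vF - vG)`,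
using `vF - vG ∈ T_G`.
-/

section FinsetCone

variable {E : Type*} [AddCommGroup E] [Module ℝ E]

def finsetCone (s : Finset E) : Set E :=
  {x | ∃ c : E → ℝ, (∀ v ∈ s, 0 ≤ c v) ∧ x = ∑ v ∈ s, c v • v}

theorem zero_mem_finsetCone (s : Finset E) : (0 : E) ∈ finsetCone s :=
  ⟨0, fun _ _ => le_rfl, by simp⟩

theorem mem_finsetCone_of_mem {s : Finset E} {v : E} (hv : v ∈ s) : v ∈ finsetCone s := by
  classical
  exact ⟨Pi.single v 1, fun u _ => by by_cases h : u = v <;> simp [h],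
    by simp [Pi.single_apply, hv]⟩

theorem smul_mem_finsetCone {s : Finset E} {a : ℝ} (ha : 0 ≤ a) {x : E}
    (hx : x ∈ finsetCone s) : a • x ∈ finsetCone s := by
  obtain ⟨c, hc, rfl⟩ := hx
  exact ⟨a • c, fun v hv => mul_nonneg ha (hc v hv), by simp [Finset.smul_sum, smul_smul]⟩

theorem convex_finsetCone (s : Finset E) : Convex ℝ (finsetCone s) := by
  rintro _ ⟨c, hc, rfl⟩ _ ⟨c', hc', rfl⟩ a b ha hb -
  refine ⟨a • c + b • c', fun v hv => ?_, ?_⟩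
  · exact add_nonneg (mul_nonneg ha (hc v hv)) (mul_nonneg hb (hc' v hv))
  · simp [Finset.smul_sum, add_smul, smul_smul, Finset.sum_add_distrib]

theorem finsetCone_mono {s t : Finset E} (h : s ⊆ t) : finsetCone s ⊆ finsetCone t := by
  classical
  rintro _ ⟨c, hc, rfl⟩
  refine ⟨fun v => if v ∈ s then c v else 0, fun v _ => ?_, ?_⟩
  · dsimp only
    split_ifs with hv
    exacts [hc v hv, le_rfl]
  · rw [← Finset.sum_subset h fun v _ hv => by simp [hv]]
    exact Finset.sum_congr rfl fun v hv => by simp [hv]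

/-- Carathéodory's elimination step: subtract from the coefficients of `x` the largest multiple
of the relation `d` that keeps them nonnegative. -/
theorem exists_mem_finsetCone_erase_of_sum_smul_eq_zero [DecidableEq E] {s : Finset E} {x : E}
    {d : E → ℝ} (hx : x ∈ finsetCone s) (hd : ∑ v ∈ s, d v • v = 0) (hpos : ∃ v ∈ s, 0 < d v) :
    ∃ v ∈ s, x ∈ finsetCone (s.erase v) := by
  obtain ⟨c, hc, rfl⟩ := hx
  obtain ⟨v₀, hv₀, hmin⟩ := (s.filter (0 < d ·)).exists_min_image (fun v => c v / d v)
    (by simpa [Finset.filter_nonempty_iff] using hpos)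
  rw [Finset.mem_filter] at hv₀
  set r := c v₀ / d v₀
  have hr : 0 ≤ r := div_nonneg (hc v₀ hv₀.1) hv₀.2.le
  have hc' : ∀ v ∈ s, 0 ≤ c v - r * d v := by
    intro v hv
    rcases le_or_gt (d v) 0 with hdv | hdv
    · nlinarith [hc v hv]
    · have := hmin v (Finset.mem_filter.2 ⟨hv, hdv⟩)
      rw [le_div_iff₀ hdv] at this
      linarith
  have hv₀zero : c v₀ - r * d v₀ = 0 := by
    rw [div_mul_cancel₀ _ hv₀.2.ne', sub_self]
  refine ⟨v₀, hv₀.1, fun v => c v - r * d v, fun v hv => hc' v (Finset.mem_of_mem_erase hv), ?_⟩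
  calc ∑ v ∈ s, c v • v = ∑ v ∈ s, (c v - r * d v) • v := by
        simp only [sub_smul, mul_smul, Finset.sum_sub_distrib, ← Finset.smul_sum, hd, smul_zero,
          sub_zero]
    _ = _ := (Finset.sum_erase _ (by rw [hv₀zero, zero_smul])).symm

theorem exists_linearIndepOn_of_mem_finsetCone {s : Finset E} {x : E} (hx : x ∈ finsetCone s) :
    ∃ t ⊆ s, LinearIndepOn ℝ id (t : Set E) ∧ x ∈ finsetCone t := by
  classical
  induction s using Finset.strongInduction with
  | H s ih =>
    by_cases hli : LinearIndepOn ℝ id (s : Set E)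
    · exact ⟨s, subset_rfl, hli, hx⟩
    obtain ⟨d, hd, v, hv, hdv⟩ := not_linearIndepOn_finset_iff.1 hli
    obtain ⟨u, hu, hxu⟩ : ∃ u ∈ s, x ∈ finsetCone (s.erase u) := by
      rcases hdv.lt_or_gt with hneg | hpos
      · exact exists_mem_finsetCone_erase_of_sum_smul_eq_zero hx (d := -d)
          (by simpa [neg_smul, Finset.sum_neg_distrib] using hd) ⟨v, hv, by simpa using hneg⟩
      · exact exists_mem_finsetCone_erase_of_sum_smul_eq_zero hx hd ⟨v, hv, hpos⟩
    obtain ⟨t, hts, ht, hxt⟩ := ih _ (Finset.erase_ssubset hu) hxu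
    exact ⟨t, hts.trans (Finset.erase_subset _ _), ht, hxt⟩

theorem finsetCone_eq_image (s : Finset E) :
    finsetCone s = Fintype.linearCombination ℝ ((↑) : ↥(s : Set E) → E) '' Ici 0 := by
  ext x
  constructor
  · rintro ⟨c, hc, rfl⟩
    refine ⟨fun v => c v, fun v => hc v v.2, ?_⟩
    rw [Fintype.linearCombination_apply]
    exact Finset.sum_attach s fun v => c v • v
  · rintro ⟨c, hc, rfl⟩
    classical
    refine ⟨fun v => if hv : v ∈ s then c ⟨v, hv⟩ else 0,
      fun v hv => by simpa [hv] using hc ⟨v, hv⟩, ?_⟩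
    rw [Fintype.linearCombination_apply, ← Finset.sum_attach s]
    exact Finset.sum_congr rfl fun v _ => by simp

end FinsetCone

section Topology

variable {E : Type*} [NormedAddCommGroup E] [NormedSpace ℝ E]

theorem isClosed_finsetCone_of_linearIndepOn [FiniteDimensional ℝ E] {s : Finset E}
    (hs : LinearIndepOn ℝ id (s : Set E)) : IsClosed (finsetCone s) := by
  rw [finsetCone_eq_image]
  have hinj := LinearIndependent.fintypeLinearCombination_injective hs
  exact (LinearMap.isClosedEmbedding_of_injective (LinearMap.ker_eq_bot.2 hinj)).isClosedMap _
    isClosed_Ici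

theorem isClosed_finsetCone [FiniteDimensional ℝ E] (s : Finset E) : IsClosed (finsetCone s) := by
  classical
  have : finsetCone s =
      ⋃ (t : Finset E)
        (_ : t ∈ s.powerset.filter fun t : Finset E => LinearIndepOn ℝ id (t : Set E)),
        finsetCone t := by
    refine Subset.antisymm (fun x hx => ?_) (iUnion₂_subset fun t ht => ?_)
    · obtain ⟨t, hts, ht, hxt⟩ := exists_linearIndepOn_of_mem_finsetCone hx
      exact mem_biUnion (Finset.mem_filter.2 ⟨Finset.mem_powerset.2 hts, ht⟩) hxt
    · exact finsetCone_mono (Finset.mem_powerset.1 (Finset.mem_filter.1 ht).1)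
  rw [this]
  exact isClosed_biUnion_finset fun t ht =>
    isClosed_finsetCone_of_linearIndepOn (Finset.mem_filter.1 ht).2

theorem exists_forall_nonpos_of_notMem_finsetCone [FiniteDimensional ℝ E] {s : Finset E} {d : E}
    (hd : d ∉ finsetCone s) : ∃ f : StrongDual ℝ E, (∀ v ∈ s, f v ≤ 0) ∧ 0 < f d := by
  obtain ⟨f, u, hfu, hud⟩ :=
    geometric_hahn_banach_closed_point (convex_finsetCone s) (isClosed_finsetCone s) hd
  have hu : 0 < u := by simpa using hfu 0 (zero_mem_finsetCone s)
  refine ⟨f, fun v hv => ?_, hu.trans hud⟩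
  by_contra! hfv
  have := hfu _ (smul_mem_finsetCone (div_pos hu hfv).le (mem_finsetCone_of_mem hv))
  rw [map_smul, smul_eq_mul, div_mul_cancel₀ _ hfv.ne'] at this
  exact this.false

theorem exists_pos_add_smul_mem_of_mem_finsetCone {P : Set E} (hP : Convex ℝ P) {w : E}
    (hw : w ∈ P) {s : Finset E} (hs : ∀ u ∈ s, w + u ∈ P) {d : E} (hd : d ∈ finsetCone s) :
    ∃ ε : ℝ, 0 < ε ∧ w + ε • d ∈ P := by
  have hP' := hP.translate_preimage_right w
  set K := ConvexCone.hull ℝ ((w + ·) ⁻¹' P)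
  have hK₀ : (0 : E) ∈ K := ConvexCone.subset_hull (by simpa using hw)
  obtain ⟨c, hc, rfl⟩ := hd
  have hdK : ∑ u ∈ s, c u • u ∈ K := by
    refine Finset.sum_induction _ (· ∈ K) (fun _ _ hx hy => K.add_mem hx hy) hK₀ fun u hu => ?_
    rcases (hc u hu).eq_or_lt with h | h
    · rwa [← h, zero_smul]
    · exact K.smul_mem h (ConvexCone.subset_hull (hs u hu))
  obtain ⟨r, hr, hmem⟩ := (ConvexCone.mem_hull_of_convex hP').1 hdK
  exact ⟨r⁻¹, inv_pos.2 hr, (Set.mem_smul_set_iff_inv_smul_mem₀ hr.ne' _ _).1 hmem⟩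

theorem exists_pos_add_smul_sub_mem_convexHull [FiniteDimensional ℝ E] {V : Finset E} {w h : E}
    (hw : w ∈ convexHull ℝ (V : Set E))
    (hh : ∀ H, IsExposed ℝ (convexHull ℝ (V : Set E)) H → w ∈ H → h ∈ H) :
    ∃ ε : ℝ, 0 < ε ∧ w + ε • (w - h) ∈ convexHull ℝ (V : Set E) := by
  classical
  by_contra! hcon
  have hd : w - h ∉ finsetCone (V.image (· - w)) := fun hd => by
    obtain ⟨ε, hε, hmem⟩ := exists_pos_add_smul_mem_of_mem_finsetCone (convex_convexHull ℝ _) hw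
      (by simpa using fun v hv => subset_convexHull ℝ _ (Finset.mem_coe.2 hv)) hd
    exact hcon ε hε hmem
  obtain ⟨f, hfV, hfd⟩ := exists_forall_nonpos_of_notMem_finsetCone hd
  have hfP : ∀ p ∈ convexHull ℝ (V : Set E), f p ≤ f w := fun p hp =>
    convexHull_min (fun v hv => by simpa using hfV _ (Finset.mem_image_of_mem (· - w) hv))
      (convex_halfSpace_le f.toLinearMap.isLinear (f w)) hp
  -- `h` lies on the exposed face where `f` attains its maximum `f w` over the polytope
  have hwh := (hh _ ContinuousLinearMap.toExposed.isExposed ⟨hw, hfP⟩).2 w hw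
  rw [map_sub] at hfd
  linarith

theorem exists_mem_openSegment_of_mem_intrinsicInterior {F : Set E} {v p : E}
    (hv : v ∈ intrinsicInterior ℝ F) (hp : p ∈ F) : ∃ q ∈ F, v ∈ openSegment ℝ p q := by
  obtain ⟨y, hy, rfl⟩ := mem_intrinsicInterior.1 hv
  have hline : ∀ t : ℝ, (y : E) + t • ((y : E) - p) ∈ affineSpan ℝ F := fun t => by
    simpa [vsub_eq_sub, vadd_eq_add, add_comm] using AffineSubspace.smul_vsub_vadd_mem _ t y.2
      (subset_affineSpan ℝ F hp) y.2
  let c : ℝ → affineSpan ℝ F := fun t => ⟨_, hline t⟩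
  have hc : Continuous c := by fun_prop
  have hnhds : ∀ᶠ t in nhds 0, c t ∈ interior (((↑) : affineSpan ℝ F → E) ⁻¹' F) :=
    hc.continuousAt.preimage_mem_nhds (by simpa [c] using isOpen_interior.mem_nhds hy)
  obtain ⟨t, hti, ht⟩ := ((hnhds.filter_mono nhdsWithin_le_nhds).and
    (self_mem_nhdsWithin : Ioi (0 : ℝ) ∈ nhdsWithin 0 (Ioi 0))).exists
  have hq : c t ∈ ((↑) : affineSpan ℝ F → E) ⁻¹' F := interior_subset hti
  refine ⟨_, hq, t / (1 + t), 1 / (1 + t), by positivity, by positivity, by field_simp; ring, ?_⟩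
  match_scalars <;> field_simp
  ring

theorem IsExtreme.subset_of_mem_intrinsicInterior {A B F : Set E} {v : E}
    (hB : IsExtreme ℝ A B) (hFA : F ⊆ A) (hv : v ∈ intrinsicInterior ℝ F) (hvB : v ∈ B) :
    F ⊆ B := by
  intro p hp
  obtain ⟨q, hq, hvpq⟩ := exists_mem_openSegment_of_mem_intrinsicInterior hv hp
  exact hB.left_mem_of_mem_openSegment (hFA hp) (hFA hq) hvB hvpq

end Topology

namespace tangentCone

variable {n : ℕ} {P F : Set (Fin n → ℝ)}

theorem zero_mem : (0 : Fin n → ℝ) ∈ tangentCone P F :=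
  ⟨0, Fin.elim0, Fin.elim0, Fin.elim0, nofun, nofun, nofun, by simp⟩

theorem smul_sub_mem {c : ℝ} {p f : Fin n → ℝ} (hc : 0 ≤ c) (hp : p ∈ P) (hf : f ∈ F) :
    c • (p - f) ∈ tangentCone P F :=
  ⟨1, fun _ => c, fun _ => p, fun _ => f, fun _ => hc, fun _ => hp, fun _ => hf, by simp⟩

theorem sub_mem {p f : Fin n → ℝ} (hp : p ∈ P) (hf : f ∈ F) : p - f ∈ tangentCone P F := by
  simpa using smul_sub_mem zero_le_one hp hf

theorem add_mem {x y : Fin n → ℝ} (hx : x ∈ tangentCone P F) (hy : y ∈ tangentCone P F) :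
    x + y ∈ tangentCone P F := by
  obtain ⟨k, c, p, f, hc, hp, hf, rfl⟩ := hx
  obtain ⟨l, c', p', f', hc', hp', hf', rfl⟩ := hy
  refine ⟨k + l, Fin.append c c', Fin.append p p', Fin.append f f', ?_, ?_, ?_, ?_⟩
  all_goals try intro i; induction i using Fin.addCases <;> simp [*]
  simp [Fin.sum_univ_add]

theorem smul_mem {a : ℝ} {x : Fin n → ℝ} (ha : 0 ≤ a) (hx : x ∈ tangentCone P F) :
    a • x ∈ tangentCone P F := by
  obtain ⟨k, c, p, f, hc, hp, hf, rfl⟩ := hx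
  exact ⟨k, a • c, p, f, fun i => mul_nonneg ha (hc i), hp, hf, by
    simp [Finset.smul_sum, smul_smul]⟩

theorem mono {F' : Set (Fin n → ℝ)} (h : F ⊆ F') : tangentCone P F ⊆ tangentCone P F' := by
  rintro x ⟨k, c, p, f, hc, hp, hf, hx⟩
  exact ⟨k, c, p, f, hc, hp, fun i => h (hf i), hx⟩

theorem subset_of_forall_sub_mem {R : Set (Fin n → ℝ)} (h₀ : 0 ∈ R)
    (hadd : ∀ x ∈ R, ∀ y ∈ R, x + y ∈ R) (hsmul : ∀ a : ℝ, 0 ≤ a → ∀ x ∈ R, a • x ∈ R)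
    (hR : ∀ p ∈ P, ∀ f ∈ F, p - f ∈ R) : tangentCone P F ⊆ R := by
  rintro _ ⟨k, c, p, f, hc, hp, hf, rfl⟩
  exact Finset.sum_induction _ (· ∈ R) (fun x y hx hy => hadd x hx y hy) h₀
    fun i _ => hsmul _ (hc i) _ (hR _ (hp i) _ (hf i))

end tangentCone

section TangentConeAddLine

variable {n : ℕ} {P G H : Set (Fin n → ℝ)} {vF vG : Fin n → ℝ}

theorem tangentCone_eq_tangentCone_add_line (hvF : vF ∈ P) (hvFH : vF ∈ H) (hvG : vG ∈ G)
    (hGP : G ⊆ P) (hGH : G ⊆ H)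
    (hH : ∀ h ∈ H, ∃ ε : ℝ, 0 < ε ∧ midpoint ℝ vF vG + ε • (midpoint ℝ vF vG - h) ∈ P) :
    tangentCone P H = {x | ∃ t ∈ tangentCone P G, ∃ r : ℝ, x = t + r • (vF - vG)} := by
  refine Subset.antisymm
    (tangentCone.subset_of_forall_sub_mem ⟨0, tangentCone.zero_mem, 0, by simp⟩ ?_ ?_ ?_) ?_
  · rintro _ ⟨t₁, ht₁, r₁, rfl⟩ _ ⟨t₂, ht₂, r₂, rfl⟩
    exact ⟨t₁ + t₂, tangentCone.add_mem ht₁ ht₂, r₁ + r₂, by module⟩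
  · rintro a ha _ ⟨t, ht, r, rfl⟩
    exact ⟨a • t, tangentCone.smul_mem ha ht, a * r, by module⟩
  · intro p hp h hh
    obtain ⟨ε, hε, hq⟩ := hH h hh
    -- with `w` the midpoint,
    -- `ε • (p - h) = ε • (p - vG) + (w + ε • (w - h) - vG) - ((1 + ε) / 2) • (vF - vG)`
    refine ⟨ε⁻¹ • (ε • (p - vG) + (midpoint ℝ vF vG + ε • (midpoint ℝ vF vG - h) - vG)),
      tangentCone.smul_mem (inv_nonneg.2 hε.le)
        (tangentCone.add_mem (tangentCone.smul_sub_mem hε.le hp hvG) (tangentCone.sub_mem hq hvG)),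
      -(1 + ε) / (2 * ε), ?_⟩
    rw [midpoint_eq_smul_add, invOf_eq_inv]
    match_scalars <;> field_simp <;> ring
  · rintro _ ⟨t, ht, r, rfl⟩
    rcases le_or_gt 0 r with hr | hr
    · exact tangentCone.add_mem (tangentCone.mono hGH ht)
        (tangentCone.smul_sub_mem hr hvF (hGH hvG))
    · rw [show r • (vF - vG) = (-r) • (vG - vF) by module]
      exact tangentCone.add_mem (tangentCone.mono hGH ht)
        (tangentCone.smul_sub_mem (neg_nonneg.2 hr.le) (hGP hvG) hvFH)

end TangentConeAddLine

namespace IsLatticePt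

variable {n : ℕ} {x y : Fin n → ℝ}

theorem add_s7 (hx : IsLatticePt x) (hy : IsLatticePt y) : IsLatticePt (x + y) := fun i => by
  obtain ⟨a, ha⟩ := hx i
  obtain ⟨b, hb⟩ := hy i
  exact ⟨a + b, by simp [ha, hb]⟩

theorem sub (hx : IsLatticePt x) (hy : IsLatticePt y) : IsLatticePt (x - y) := fun i => by
  obtain ⟨a, ha⟩ := hx i
  obtain ⟨b, hb⟩ := hy i
  exact ⟨a - b, by simp [ha, hb]⟩

theorem intCast_smul (hx : IsLatticePt x) (m : ℤ) : IsLatticePt ((m : ℝ) • x) := fun i => by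
  obtain ⟨a, ha⟩ := hx i
  exact ⟨m * a, by simp [ha]⟩

end IsLatticePt

theorem sep_isLatticePt_add_line {n : ℕ} {T : Set (Fin n → ℝ)} {u : Fin n → ℝ}
    (hu : IsLatticePt u) (hT : ∀ t ∈ T, ∀ a : ℝ, 0 ≤ a → t + a • u ∈ T) :
    {x ∈ {x | ∃ t ∈ T, ∃ r : ℝ, x = t + r • u} | IsLatticePt x} =
      {x | ∃ s ∈ {y ∈ T | IsLatticePt y}, ∃ m : ℤ, x = s + (m : ℝ) • u} := by
  ext x
  constructor
  · rintro ⟨⟨t, ht, r, rfl⟩, hx⟩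
    refine ⟨t + (r - ⌊r⌋) • u, ⟨hT t ht _ (sub_nonneg.2 (Int.floor_le r)), ?_⟩, ⌊r⌋, by module⟩
    convert hx.sub (hu.intCast_smul ⌊r⌋) using 1
    module
  · rintro ⟨s, ⟨hs, hsL⟩, m, rfl⟩
    exact ⟨⟨s, hs, m, rfl⟩, hsL.add_s7 (hu.intCast_smul m)⟩

theorem stmt7_general {n : ℕ} (P : Set (Fin n → ℝ))
    (V : Finset (Fin n → ℝ))
    (hP : P = convexHull ℝ (V : Set (Fin n → ℝ)))
    (F G : Set (Fin n → ℝ))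
    (hFexp : IsExposed ℝ P F)
    (hGexp : IsExposed ℝ P G)
    (vF vG : Fin n → ℝ)
    (hvF : IsLatticePt vF) (hvFmem : vF ∈ intrinsicInterior ℝ F)
    (hvG : IsLatticePt vG) (hvGmem : vG ∈ intrinsicInterior ℝ G)
    (H : Set (Fin n → ℝ))
    (hFGH : F ∪ G ⊆ H)
    (hHmin : ∀ H' : Set (Fin n → ℝ), H'.Nonempty → IsExposed ℝ P H' →
      F ∪ G ⊆ H' → H ⊆ H') :
    tangentCone P H = {x | ∃ t ∈ tangentCone P G, ∃ r : ℝ, x = t + r • (vF - vG)} ∧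
      latticeTangentCone P H =
        {x | ∃ s ∈ latticeTangentCone P G, ∃ m : ℤ, x = s + (m : ℝ) • (vF - vG)} := by
  have hvFF := intrinsicInterior_subset hvFmem
  have hvGG := intrinsicInterior_subset hvGmem
  have hvFP : vF ∈ P := hFexp.subset hvFF
  have hvGP : vG ∈ P := hGexp.subset hvGG
  have hmid : midpoint ℝ vF vG ∈ openSegment ℝ vF vG := midpoint_mem_openSegment vF vG
  have hface : ∀ H', IsExposed ℝ P H' → midpoint ℝ vF vG ∈ H' → F ∪ G ⊆ H' := by
    intro H' hH' hw
    have hext := hH'.isExtreme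
    exact union_subset
      (hext.subset_of_mem_intrinsicInterior hFexp.subset hvFmem
        (hext.left_mem_of_mem_openSegment hvFP hvGP hw hmid))
      (hext.subset_of_mem_intrinsicInterior hGexp.subset hvGmem
        (hext.right_mem_of_mem_openSegment hvFP hvGP hw hmid))
  have hH : ∀ h ∈ H, ∃ ε : ℝ, 0 < ε ∧ midpoint ℝ vF vG + ε • (midpoint ℝ vF vG - h) ∈ P := by
    subst hP
    exact fun h hh => exists_pos_add_smul_sub_mem_convexHull
      ((convex_convexHull ℝ _).openSegment_subset hvFP hvGP hmid)
      fun H' hH' hw => hHmin H' ⟨_, hw⟩ hH' (hface H' hH' hw) hh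
  have hT := tangentCone_eq_tangentCone_add_line hvFP (hFGH (.inl hvFF)) hvGG hGexp.subset
    (subset_union_right.trans hFGH) hH
  refine ⟨hT, ?_⟩
  rw [latticeTangentCone, hT]
  exact sep_isLatticePt_add_line (hvF.sub hvG) fun t ht a ha =>
    tangentCone.add_mem ht (tangentCone.smul_sub_mem ha hvFP hvGG)

/-- Let `F`, `G` be faces of `P`, with lattice points `v_F`, `v_G` in their
respective relative interiors, and let `H` be the smallest face of `P` containing `F ∪ G`.
Then `T_H = T_G + ℝ (v_F - v_G)` and `S_H = S_G + ℤ (v_F - v_G)`. -/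
theorem stmt7 {n : ℕ} (hn : 1 ≤ n) (P : Set (Fin n → ℝ))
    (V : Finset (Fin n → ℝ)) (hV : ∀ v ∈ V, IsLatticePt v)
    (hP : P = convexHull ℝ (V : Set (Fin n → ℝ)))
    (hdim : affineSpan ℝ P = ⊤)
    (F G : Set (Fin n → ℝ))
    (hFne : F.Nonempty) (hFexp : IsExposed ℝ P F)
    (hGne : G.Nonempty) (hGexp : IsExposed ℝ P G)
    (vF vG : Fin n → ℝ)
    (hvF : IsLatticePt vF) (hvFmem : vF ∈ intrinsicInterior ℝ F)
    (hvG : IsLatticePt vG) (hvGmem : vG ∈ intrinsicInterior ℝ G)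
    (H : Set (Fin n → ℝ)) (hHne : H.Nonempty) (hHexp : IsExposed ℝ P H)
    (hFGH : F ∪ G ⊆ H)
    (hHmin : ∀ H' : Set (Fin n → ℝ), H'.Nonempty → IsExposed ℝ P H' →
      F ∪ G ⊆ H' → H ⊆ H') :
    tangentCone P H = {x | ∃ t ∈ tangentCone P G, ∃ r : ℝ, x = t + r • (vF - vG)} ∧
      latticeTangentCone P H =
        {x | ∃ s ∈ latticeTangentCone P G, ∃ m : ℤ, x = s + (m : ℝ) • (vF - vG)} :=
  stmt7_general P V hP F G hFexp hGexp vF vG hvF hvFmem hvG hvGmem H hFGH hHmin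
end

section
/- Let R be a ring and let C be a cochain complex of R-modules. Suppose there exists a bounded cochain complex B, all of whose terms are finitely generated projective R-modules, such that C and B become isomorphic in the derived category of R-modules. Then there exist a bounded cochain complex B' whose terms are finitely generated projective R-modules and a quasi-isomorphism of complexes B' ⟶ C. -/
/-!
A bounded above complex of projectives is K-projective, so every morphism out of it in the
derived category is represented by a chain map. Representing the inverse of the given isomorphism
`Q C ≅ Q B` this way gives a chain map `B ⟶ C` whose image in the derived category is an
isomorphism, i.e. a quasi-isomorphism.
-/

open CategoryTheory Limits

universe w u

namespace CochainComplex.IsKProjective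

open DerivedCategory

variable {C : Type*} [Category* C] [Abelian C] [HasDerivedCategory C]
  {K L : CochainComplex C ℤ} [K.IsKProjective]

lemma exists_Q_map_eq (φ : Q.obj K ⟶ Q.obj L) : ∃ f : K ⟶ L, Q.map f = φ := by
  obtain ⟨g, hg⟩ := (Qh_map_bijective K ((HomotopyCategory.quotient _ _).obj L)).surjective
    ((quotientCompQhIso C).hom.app K ≫ φ ≫ (quotientCompQhIso C).inv.app L)
  obtain ⟨f, rfl⟩ := (HomotopyCategory.quotient _ _).map_surjective g
  refine ⟨f, ?_⟩
  rw [← cancel_epi ((quotientCompQhIso C).hom.app K), ← quotientCompQhIso_hom_naturality, hg]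
  simp

lemma exists_quasiIso_of_iso (e : Q.obj K ≅ Q.obj L) : ∃ f : K ⟶ L, QuasiIso f := by
  obtain ⟨f, hf⟩ := exists_Q_map_eq e.hom
  refine ⟨f, (isIso_Q_map_iff_quasiIso _ f).1 ?_⟩
  rw [hf]
  infer_instance

end CochainComplex.IsKProjective

/-- A cochain complex of `R`-modules which is isomorphic in the derived
category to a bounded complex of finitely generated projective modules admits a
quasi-isomorphism from such a complex. -/
theorem stmt11 (R : Type u) [Ring R]
    [HasDerivedCategory.{w} (ModuleCat.{u} R)]
    (C : CochainComplex (ModuleCat.{u} R) ℤ)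
    (h : ∃ B : CochainComplex (ModuleCat.{u} R) ℤ,
      (∃ N : ℕ, ∀ i : ℤ, ((i : ℤ) < -(N : ℤ) ∨ (N : ℤ) < i) → IsZero (B.X i)) ∧
      (∀ i : ℤ, Module.Finite R (B.X i) ∧ Module.Projective R (B.X i)) ∧
      Nonempty (DerivedCategory.Q.obj C ≅ DerivedCategory.Q.obj B)) :
    ∃ B' : CochainComplex (ModuleCat.{u} R) ℤ,
      (∃ N : ℕ, ∀ i : ℤ, ((i : ℤ) < -(N : ℤ) ∨ (N : ℤ) < i) → IsZero (B'.X i)) ∧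
      (∀ i : ℤ, Module.Finite R (B'.X i) ∧ Module.Projective R (B'.X i)) ∧
      ∃ f : B' ⟶ C, QuasiIso f := by
  obtain ⟨B, ⟨N, hN⟩, hfg, ⟨e⟩⟩ := h
  have : B.IsStrictlyLE N := (B.isStrictlyLE_iff N).2 fun i hi ↦ hN i (Or.inr hi)
  have (i : ℤ) : Projective (B.X i) :=
    have := (hfg i).2
    (B.X i).projective_of_categoryTheory_projective
  have : B.IsKProjective := B.isKProjective_of_projective N
  exact ⟨B, ⟨N, hN⟩, hfg, CochainComplex.IsKProjective.exists_quasiIso_of_iso e.symm⟩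
end

section
/- Let R be a commutative ring and let K be a chain complex of free R-modules such that for every degree the image of the differential is a free R-module. If K is acyclic (all homology modules of K vanish), then for every R-module M the chain complex K ⊗_R M is acyclic. -/
/-!
Acyclicity gives `ker dᵢ = im dᵢ₊₁`, and since every boundary module `im dᵢ` is projective the
surjection `dᵢ : Kᵢ → im dᵢ` has a section `σᵢ`. Then `x - σᵢ (dᵢ x)` is a cycle, hence a
boundary, and `h x := σᵢ₊₁ (x - σᵢ (dᵢ x))` is a contracting homotopy: `d h + h d = 𝟙`.
Contracting homotopies survive any additive functor, in particular `- ⊗_R M`, and a complex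
homotopic to zero has zero homology.
-/

open CategoryTheory Limits MonoidalCategory

universe u v

namespace HomologicalComplex

variable {V : Type*} [Category V] [Preadditive V] {ι : Type*} {c : ComplexShape ι}

lemma isZero_homology_of_homotopy_id_zero [CategoryWithHomology V] {K : HomologicalComplex V c}
    (h : Homotopy (𝟙 K) 0) (i : ι) : IsZero (K.homology i) := by
  rw [IsZero.iff_id_eq_zero, ← homologyMap_id, h.homologyMap_eq, homologyMap_zero]

end HomologicalComplex

namespace CategoryTheory.Functor

variable {V W : Type*} [Category V] [Preadditive V] [Category W] [Preadditive W]
  {ι : Type*} {c : ComplexShape ι}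

def mapHomotopyIdZero (F : V ⥤ W) [F.Additive] {K : HomologicalComplex V c}
    (h : Homotopy (𝟙 K) 0) : Homotopy (𝟙 ((F.mapHomologicalComplex c).obj K)) 0 :=
  (Homotopy.ofEq ((F.mapHomologicalComplex c).map_id K).symm).trans
    ((F.mapHomotopy h).trans (Homotopy.ofEq ((F.mapHomologicalComplex c).map_zero K K)))

end CategoryTheory.Functor

namespace ChainComplex

variable {R : Type u} [Ring R] {K : ChainComplex (ModuleCat.{v} R) ℤ}

lemma mem_range_d_of_exactAt {i j k : ℤ} (hK : K.ExactAt i) (hji : (ComplexShape.down ℤ).Rel j i)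
    (hik : (ComplexShape.down ℤ).Rel i k) {x : K.X i} (hx : K.d i k x = 0) :
    x ∈ LinearMap.range (K.d j i).hom := by
  rw [K.exactAt_iff' j i k ((ComplexShape.down ℤ).prev_eq' hji)
    ((ComplexShape.down ℤ).next_eq' hik)] at hK
  exact (ShortComplex.moduleCat_exact_iff _).1 hK x hx

section Contraction

variable
  (σ : ∀ i j, (ComplexShape.down ℤ).Rel i j → (LinearMap.range (K.d i j).hom →ₗ[R] K.X i))
  (hσ : ∀ i j hij, (K.d i j).hom.rangeRestrict ∘ₗ σ i j hij = LinearMap.id)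

def cycleProj (i : ℤ) : K.X i →ₗ[R] K.X i :=
  LinearMap.id - σ i (i - 1) (by simp) ∘ₗ (K.d i (i - 1)).hom.rangeRestrict

include hσ in
lemma d_section_apply {i j : ℤ} (hij : (ComplexShape.down ℤ).Rel i j)
    (y : LinearMap.range (K.d i j).hom) : K.d i j (σ i j hij y) = y :=
  congrArg Subtype.val (LinearMap.congr_fun (hσ i j hij) y)

include hσ in
lemma d_cycleProj (i : ℤ) (x : K.X i) : K.d i (i - 1) (cycleProj σ i x) = 0 := by
  simp [cycleProj, d_section_apply σ hσ]

lemma cycleProj_of_d_eq_zero {i : ℤ} {x : K.X i} (hx : K.d i (i - 1) x = 0) :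
    cycleProj σ i x = x := by
  have hx' : (K.d i (i - 1)).hom.rangeRestrict x = 0 := Subtype.ext hx
  simp [cycleProj, hx']

variable (hK : ∀ i, K.ExactAt i)

def contractingHom (i j : ℤ) (hji : (ComplexShape.down ℤ).Rel j i) :
    K.X i ⟶ K.X j :=
  ModuleCat.ofHom <| σ j i hji ∘ₗ (cycleProj σ i).codRestrict _ fun x =>
    mem_range_d_of_exactAt (hK i) hji (by simp) (d_cycleProj σ hσ i x)

lemma d_contractingHom {i j : ℤ} (hji : (ComplexShape.down ℤ).Rel j i) (x : K.X i) :
    K.d j i (contractingHom σ hσ hK i j hji x) = cycleProj σ i x :=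
  d_section_apply σ hσ hji _

lemma contractingHom_d (i : ℤ) (x : K.X i) :
    contractingHom σ hσ hK (i - 1) i (by simp) (K.d i (i - 1) x) =
      σ i (i - 1) (by simp) ((K.d i (i - 1)).hom.rangeRestrict x) := by
  have hdd : K.d (i - 1) (i - 1 - 1) (K.d i (i - 1) x) = 0 := by
    rw [← ConcreteCategory.comp_apply, K.d_comp_d]; rfl
  exact congrArg (σ i (i - 1) _) (Subtype.ext (cycleProj_of_d_eq_zero σ hdd))

lemma nullHomotopicMap'_contractingHom :
    Homotopy.nullHomotopicMap' (contractingHom σ hσ hK) = 𝟙 K := by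
  ext i x
  rw [Homotopy.nullHomotopicMap'_f (show (ComplexShape.down ℤ).Rel (i + 1) i by simp)
    (show (ComplexShape.down ℤ).Rel i (i - 1) by simp)]
  simp only [ModuleCat.hom_add, ModuleCat.hom_comp, LinearMap.add_apply, LinearMap.comp_apply]
  rw [contractingHom_d, d_contractingHom]
  simp [cycleProj]

end Contraction

theorem nonempty_homotopy_id_zero_of_exactAt (hK : ∀ i, K.ExactAt i)
    (hB : ∀ i j, (ComplexShape.down ℤ).Rel i j →
      Module.Projective R (LinearMap.range (K.d i j).hom)) :
    Nonempty (Homotopy (𝟙 K) 0) := by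
  have hσ : ∀ i j (hij : (ComplexShape.down ℤ).Rel i j),
      ∃ s : LinearMap.range (K.d i j).hom →ₗ[R] K.X i,
        (K.d i j).hom.rangeRestrict ∘ₗ s = LinearMap.id := fun i j hij =>
    have := hB i j hij
    (K.d i j).hom.rangeRestrict.exists_rightInverse_of_surjective (LinearMap.range_rangeRestrict _)
  choose σ hσ using hσ
  exact ⟨(Homotopy.ofEq (nullHomotopicMap'_contractingHom σ hσ hK).symm).trans
    (Homotopy.nullHomotopy' _)⟩

end ChainComplex

theorem stmt12_general (R : Type u) [CommRing R]
    (K : ChainComplex (ModuleCat.{u} R) ℤ)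
    (him : ∀ i : ℤ, Module.Free R (LinearMap.range (K.d i (i - 1)).hom))
    (hacyclic : ∀ i : ℤ, IsZero (K.homology i))
    (M : Type u) [AddCommGroup M] [Module R M] :
    ∀ i : ℤ, IsZero ((((tensorRight (ModuleCat.of R M)).mapHomologicalComplex
        (ComplexShape.down ℤ)).obj K).homology i) := by
  have hB : ∀ i j, (ComplexShape.down ℤ).Rel i j →
      Module.Projective R (LinearMap.range (K.d i j).hom) := by
    rintro i j hij
    obtain rfl : j = i - 1 := by rw [ComplexShape.down_Rel] at hij; omega
    have := him i
    infer_instance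
  obtain ⟨h⟩ := ChainComplex.nonempty_homotopy_id_zero_of_exactAt
    (fun i => (K.exactAt_iff_isZero_homology i).2 (hacyclic i)) hB
  exact HomologicalComplex.isZero_homology_of_homotopy_id_zero
    ((tensorRight (ModuleCat.of R M)).mapHomotopyIdZero h)

/-- Let `K` be an acyclic chain complex of free `R`-modules such that the
image of each differential is free. Then for every `R`-module `M` the complex `K ⊗_R M`
is acyclic. -/
theorem stmt12 (R : Type u) [CommRing R]
    (K : ChainComplex (ModuleCat.{u} R) ℤ)
    (hfree : ∀ i : ℤ, Module.Free R (K.X i))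
    (him : ∀ i : ℤ, Module.Free R (LinearMap.range (K.d i (i - 1)).hom))
    (hacyclic : ∀ i : ℤ, IsZero (K.homology i))
    (M : Type u) [AddCommGroup M] [Module R M] :
    ∀ i : ℤ, IsZero ((((tensorRight (ModuleCat.of R M)).mapHomologicalComplex
        (ComplexShape.down ℤ)).obj K).homology i) :=
  stmt12_general R K him hacyclic M
end
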